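/- arXiv:1810.10883 — 2 statements merged into one kernel-verified Lean document; each statement's English description precedes it below -/
import Mathlib

section
/- For any λ > 1 and any integer n > 2^{λ−1}/(2^{λ−1} − 1), there is no probability measure Λ on [0,1] such that C(n,s)^{-1} π_n(s) = ∫_0^1 α^s (1−α)^{n−s} dΛ(α) for all s = 0,...,n, where π_n is the normalized polynomial-tail prior with π_n(0) ∝ 1 and π_n(s) ∝ s^{−λ} for s = 1,...,n. -/
open Finset MeasureTheory

/-! If the prior were a mixture of binomial laws, its rescaled masses
`m_s = π(s) / C(n,s) = ∫ α^s (1-α)^(n-s) dΛ` would satisfy the Cauchy–Schwarz (Hankel)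
inequality `m_1² ≤ m_0 m_2`. For the polynomial-tail prior this says `n - 1 ≤ 2^(1-λ) n`,
which is exactly what the lower bound on `n` excludes. -/

theorem sq_integral_mul_mul_le {X : Type*} [MeasurableSpace X] {μ : Measure X}
    {u v h : X → ℝ} (hh : 0 ≤ᵐ[μ] h) (huu : Integrable (fun x => u x ^ 2 * h x) μ)
    (huv : Integrable (fun x => u x * v x * h x) μ)
    (hvv : Integrable (fun x => v x ^ 2 * h x) μ) :
    (∫ x, u x * v x * h x ∂μ) ^ 2 ≤ (∫ x, u x ^ 2 * h x ∂μ) * ∫ x, v x ^ 2 * h x ∂μ := by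
  have hquad : ∀ t : ℝ, 0 ≤ (∫ x, u x ^ 2 * h x ∂μ) * (t * t)
      + (-2 * ∫ x, u x * v x * h x ∂μ) * t + ∫ x, v x ^ 2 * h x ∂μ := by
    intro t
    have hexpand : (fun x => (t * u x - v x) ^ 2 * h x) = fun x =>
        (t * t) * (u x ^ 2 * h x) - (2 * t) * (u x * v x * h x) + v x ^ 2 * h x := by
      funext x; ring
    have hnonneg : 0 ≤ ∫ x, (t * u x - v x) ^ 2 * h x ∂μ :=
      integral_nonneg_of_ae (hh.mono fun x hx => mul_nonneg (sq_nonneg _) hx)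
    have hint : Integrable (fun x => (t * t) * (u x ^ 2 * h x) - (2 * t) * (u x * v x * h x)) μ :=
      (huu.const_mul _).sub (huv.const_mul _)
    rw [hexpand, integral_add hint hvv,
      integral_sub (huu.const_mul _) (huv.const_mul _), integral_const_mul,
      integral_const_mul] at hnonneg
    linarith
  have hdiscrim := discrim_le_zero hquad
  rw [discrim] at hdiscrim
  linarith

noncomputable def binomialMoment (μ : Measure ℝ) (n s : ℕ) : ℝ :=
  ∫ α in Set.Icc (0 : ℝ) 1, α ^ s * (1 - α) ^ (n - s) ∂μ

theorem binomialMoment_one_sq_le (μ : Measure ℝ) [IsFiniteMeasure μ] {n : ℕ} (hn : 2 ≤ n) :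
    binomialMoment μ n 1 ^ 2 ≤ binomialMoment μ n 0 * binomialMoment μ n 2 := by
  obtain ⟨k, rfl⟩ : ∃ k, n = k + 2 := ⟨n - 2, by omega⟩
  have hint : ∀ f : ℝ → ℝ, Continuous f → IntegrableOn f (Set.Icc 0 1) μ :=
    fun f hf => hf.integrableOn_Icc
  have key := sq_integral_mul_mul_le (μ := μ.restrict (Set.Icc 0 1))
    (u := fun α => 1 - α) (v := fun α => α) (h := fun α => (1 - α) ^ k)
    ((ae_restrict_mem measurableSet_Icc).mono fun α hα => pow_nonneg (by linarith [hα.2]) k)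
    (hint _ (by fun_prop)) (hint _ (by fun_prop)) (hint _ (by fun_prop))
  convert key using 3 <;> unfold binomialMoment <;> congr 1 <;> funext α
  all_goals simp only [Nat.sub_zero, show k + 2 - 1 = k + 1 by omega]; ring

theorem two_mul_rpow_neg_mul_lt_sub_one {lam x : ℝ} (hlam : 1 < lam)
    (hx : (2 : ℝ) ^ (lam - 1) / ((2 : ℝ) ^ (lam - 1) - 1) < x) :
    2 * (2 : ℝ) ^ (-lam) * x < x - 1 := by
  have ha : (1 : ℝ) < 2 ^ (lam - 1) := Real.one_lt_rpow (by norm_num) (by linarith)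
  have hinv : 2 * (2 : ℝ) ^ (-lam) = ((2 : ℝ) ^ (lam - 1))⁻¹ := by
    rw [← Real.rpow_neg zero_le_two, neg_sub, Real.rpow_sub two_pos, Real.rpow_neg zero_le_two]
    ring
  rw [div_lt_iff₀ (by linarith)] at hx
  rw [hinv, inv_mul_lt_iff₀ (by linarith)]
  linarith

/-- For λ > 1 and integer n > 2^{λ−1}/(2^{λ−1}−1), the normalized
polynomial-tail prior π_n(0) ∝ 1, π_n(s) ∝ s^{−λ} on {0,...,n} admits no
spike-and-slab representation: there is no probability measure Λ on [0,1] with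
C(n,s)⁻¹ π_n(s) = ∫ α^s (1−α)^{n−s} dΛ(α) for all s = 0,...,n. -/
theorem stmt_10 (lam : ℝ) (hlam : 1 < lam) (n : ℕ)
    (hn : (2 : ℝ) ^ (lam - 1) / ((2 : ℝ) ^ (lam - 1) - 1) < (n : ℝ))
    (w : ℕ → ℝ) (hw : ∀ s : ℕ, w s = if s = 0 then 1 else (s : ℝ) ^ (-lam))
    (π : ℕ → ℝ) (hπ : ∀ s, π s = w s / ∑ t ∈ range (n + 1), w t) :
    ¬ ∃ Λ : Measure ℝ, IsProbabilityMeasure Λ ∧ Λ (Set.Icc (0 : ℝ) 1)ᶜ = 0 ∧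
        ∀ s ≤ n, (n.choose s : ℝ)⁻¹ * π s
          = ∫ α in Set.Icc (0 : ℝ) 1, α ^ s * (1 - α) ^ (n - s) ∂Λ := by
  rintro ⟨Λ, hΛ, -, hmom⟩
  have hlt := two_mul_rpow_neg_mul_lt_sub_one hlam hn
  have hn2 : 2 ≤ n := by
    have : (1 : ℝ) < n := by
      have : 0 ≤ 2 * (2 : ℝ) ^ (-lam) * n := by positivity
      linarith
    exact_mod_cast this
  set Z := ∑ t ∈ range (n + 1), w t
  have hZ : 0 < Z := by
    refine sum_pos' (fun t _ => ?_) ⟨0, by simp, by simp [hw]⟩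
    rw [hw]
    split_ifs <;> positivity
  have hankel := binomialMoment_one_sq_le Λ hn2
  rw [binomialMoment, binomialMoment, binomialMoment, ← hmom 0 (by omega), ← hmom 1 (by omega),
    ← hmom 2 (by omega), hπ, hπ, hπ, show w 0 = 1 by simp [hw], show w 1 = 1 by simp [hw],
    show w 2 = 2 ^ (-lam) by simp [hw]] at hankel
  simp only [Nat.choose_zero_right, Nat.choose_one_right, Nat.cast_choose_two,
    Nat.cast_one] at hankel
  have hn1 : (0 : ℝ) < n - 1 := by
    have : (2 : ℝ) ≤ n := by exact_mod_cast hn2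
    linarith
  field_simp at hankel
  linarith
end

section
/- Let μ_0 = 1, μ_1 = e^{−1}/n, μ_2 = 2e^{−2^λ}/(n(n−1)) with λ > log₂(2 + ln 2). If n > c/(c−1) where c = e^{2^λ − 2}/2 > 1, then μ_0 μ_2 − μ_1² = 2e^{−2^λ}/(n(n−1)) − e^{−2}/n² < 0; hence the sub-exponential prior π_n(s) ∝ e^{−s^λ} on {0,...,n} admits no spike-and-slab representation. -/
open Finset MeasureTheory

/-! A spike-and-slab representation makes `s ↦ C(n,s)⁻¹ π_n(s)` a moment sequence of the
Bernstein kernels `α ^ s (1 - α) ^ (n - s)`, and such sequences are log-convex: the quadratic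
`t ↦ t² m₀ + 2 t m₁ + m₂` is the integral of `(1 - α) ^ (n - 2) (t (1 - α) + α) ^ 2 ≥ 0`, so its
discriminant `m₁² - m₀ m₂` is nonpositive. For the prior `∝ e^{-s^λ}` the ratio of both sides is
governed by `e^{-2} = 2 c e^{-2^λ}`, and `n > c / (c - 1)` is exactly `n / (n - 1) < c`, which
breaks log-convexity at `s = 0, 1, 2`. -/

noncomputable def bernsteinMoment (μ : Measure ℝ) (n s : ℕ) : ℝ :=
  ∫ α in Set.Icc (0 : ℝ) 1, α ^ s * (1 - α) ^ (n - s) ∂μ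

lemma integrableOn_bernsteinKernel (μ : Measure ℝ) [IsLocallyFiniteMeasure μ] (n s : ℕ) :
    IntegrableOn (fun α : ℝ => α ^ s * (1 - α) ^ (n - s)) (Set.Icc 0 1) μ :=
  (by fun_prop : Continuous fun α : ℝ => α ^ s * (1 - α) ^ (n - s)).continuousOn
    |>.integrableOn_compact isCompact_Icc

theorem bernsteinMoment_sq_le (μ : Measure ℝ) [IsLocallyFiniteMeasure μ] {n s : ℕ}
    (h : s + 2 ≤ n) :
    bernsteinMoment μ n (s + 1) ^ 2 ≤ bernsteinMoment μ n s * bernsteinMoment μ n (s + 2) := by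
  obtain ⟨k, rfl⟩ : ∃ k, n = s + 2 + k := ⟨n - (s + 2), by omega⟩
  have hint := integrableOn_bernsteinKernel μ (s + 2 + k)
  have hquad : ∀ t : ℝ, 0 ≤ bernsteinMoment μ (s + 2 + k) s * (t * t)
      + 2 * bernsteinMoment μ (s + 2 + k) (s + 1) * t + bernsteinMoment μ (s + 2 + k) (s + 2) := by
    intro t
    have hsum : ∫ α in Set.Icc (0 : ℝ) 1, (t * t * (α ^ s * (1 - α) ^ (s + 2 + k - s))
          + 2 * t * (α ^ (s + 1) * (1 - α) ^ (s + 2 + k - (s + 1)))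
          + α ^ (s + 2) * (1 - α) ^ (s + 2 + k - (s + 2))) ∂μ
        = bernsteinMoment μ (s + 2 + k) s * (t * t)
          + 2 * bernsteinMoment μ (s + 2 + k) (s + 1) * t
          + bernsteinMoment μ (s + 2 + k) (s + 2) := by
      rw [integral_add _ (hint (s + 2)), integral_add, integral_const_mul, integral_const_mul]
      · simp only [bernsteinMoment]
        ring
      exacts [(hint s).const_mul _, (hint (s + 1)).const_mul _,
        ((hint s).const_mul _).add ((hint (s + 1)).const_mul _)]
    rw [← hsum]
    refine setIntegral_nonneg measurableSet_Icc fun α ⟨hα0, hα1⟩ => ?_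
    have hsq : t * t * (α ^ s * (1 - α) ^ (s + 2 + k - s))
        + 2 * t * (α ^ (s + 1) * (1 - α) ^ (s + 2 + k - (s + 1)))
        + α ^ (s + 2) * (1 - α) ^ (s + 2 + k - (s + 2))
        = α ^ s * (1 - α) ^ k * (t * (1 - α) + α) ^ 2 := by
      rw [show s + 2 + k - s = k + 2 by omega, show s + 2 + k - (s + 1) = k + 1 by omega,
        show s + 2 + k - (s + 2) = k by omega]
      ring
    rw [hsq]
    have : 0 ≤ 1 - α := by linarith
    positivity
  have := discrim_le_zero hquad
  rw [discrim] at this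
  nlinarith

theorem one_lt_exp_two_rpow_sub_two_div_two {lam : ℝ}
    (hlam : Real.logb 2 (2 + Real.log 2) < lam) :
    1 < Real.exp ((2 : ℝ) ^ lam - 2) / 2 := by
  have hpow : 2 + Real.log 2 < (2 : ℝ) ^ lam := by
    rwa [← Real.logb_lt_iff_lt_rpow one_lt_two (by positivity)]
  rw [lt_div_iff₀ two_pos, one_mul, ← Real.log_lt_iff_lt_exp two_pos]
  linarith

theorem one_div_mul_sub_one_lt_div_sq {c x : ℝ} (hc : 1 < c) (hx : c / (c - 1) < x) :
    1 / (x * (x - 1)) < c / x ^ 2 := by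
  rw [div_lt_iff₀ (by linarith)] at hx
  have hx1 : 1 < x := by nlinarith
  rw [div_lt_div_iff₀ (by nlinarith) (by positivity)]
  nlinarith

/-- with μ₀ = 1, μ₁ = e^{−1}/n, μ₂ = 2e^{−2^λ}/(n(n−1)) and
λ > log₂(2 + ln 2), if n > c/(c−1) where c = e^{2^λ−2}/2, then c > 1 and
μ₀μ₂ − μ₁² < 0; hence the sub-exponential prior π_n(s) ∝ e^{−s^λ} on {0,...,n}
admits no spike-and-slab representation. -/
theorem stmt_12 (lam : ℝ) (hlam : Real.logb 2 (2 + Real.log 2) < lam)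
    (n : ℕ) (hn2 : 2 ≤ n)
    (hn : Real.exp ((2 : ℝ) ^ lam - 2) / 2 / (Real.exp ((2 : ℝ) ^ lam - 2) / 2 - 1)
      < (n : ℝ))
    (π : ℕ → ℝ)
    (hπ : ∀ s, π s = Real.exp (-(s : ℝ) ^ lam)
      / ∑ t ∈ range (n + 1), Real.exp (-(t : ℝ) ^ lam)) :
    1 < Real.exp ((2 : ℝ) ^ lam - 2) / 2 ∧
    (1 : ℝ) * (2 * Real.exp (-(2 : ℝ) ^ lam) / ((n : ℝ) * ((n : ℝ) - 1)))
      - (Real.exp (-1) / (n : ℝ)) ^ 2 < 0 ∧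
    ¬ ∃ Λ : Measure ℝ, IsProbabilityMeasure Λ ∧ Λ (Set.Icc (0 : ℝ) 1)ᶜ = 0 ∧
        ∀ s ≤ n, (n.choose s : ℝ)⁻¹ * π s
          = ∫ α in Set.Icc (0 : ℝ) 1, α ^ s * (1 - α) ^ (n - s) ∂Λ := by
  have hc := one_lt_exp_two_rpow_sub_two_div_two hlam
  have hlam0 : 0 < lam :=
    (Real.logb_pos one_lt_two (by linarith [Real.log_pos one_lt_two])).trans hlam
  have hn1 : (1 : ℝ) < n := by exact_mod_cast hn2
  set E := Real.exp (-(2 : ℝ) ^ lam)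
  set c := Real.exp ((2 : ℝ) ^ lam - 2) / 2 with hc_def
  have hexp : Real.exp (-1) ^ 2 = 2 * c * E := by
    rw [hc_def, ← Real.exp_nat_mul, mul_div_cancel₀ _ two_ne_zero, ← Real.exp_add]
    congr 1
    push_cast
    ring
  have hneg : 2 * E / (n * (n - 1)) < (Real.exp (-1) / n) ^ 2 := by
    calc 2 * E / (n * (n - 1)) = 2 * E * (1 / (n * (n - 1))) := by ring
      _ < 2 * E * (c / n ^ 2) :=
        mul_lt_mul_of_pos_left (one_div_mul_sub_one_lt_div_sq hc hn) (by positivity)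
      _ = (Real.exp (-1) / n) ^ 2 := by rw [div_pow, hexp]; ring
  refine ⟨hc, by linarith, ?_⟩
  rintro ⟨Λ, _, -, hrep⟩
  set Z := ∑ t ∈ range (n + 1), Real.exp (-(t : ℝ) ^ lam)
  have hZ : 0 < Z := sum_pos (fun t _ => Real.exp_pos _) ⟨0, by simp⟩
  have hmoment : ∀ s ≤ n,
      bernsteinMoment Λ n s = (n.choose s : ℝ)⁻¹ * Real.exp (-(s : ℝ) ^ lam) / Z := by
    intro s hs
    rw [bernsteinMoment, ← hrep s hs, hπ, mul_div_assoc]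
  have hlog := bernsteinMoment_sq_le Λ (s := 0) hn2
  rw [hmoment 0 (by omega), hmoment 1 (by omega), hmoment 2 hn2, div_pow, div_mul_div_comm,
    ← sq, div_le_div_iff_of_pos_right (by positivity)] at hlog
  simp only [Nat.choose_zero_right, Nat.choose_one_right, Nat.cast_choose_two, Nat.cast_zero,
    Nat.cast_one, Nat.cast_ofNat, Real.zero_rpow hlam0.ne', Real.one_rpow, neg_zero,
    Real.exp_zero, inv_one, inv_div, one_mul, mul_one, inv_mul_eq_div] at hlog
  linarith [div_mul_eq_mul_div (2 : ℝ) (n * (n - 1)) E]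
end
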